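/- Define S(ξ) = Σ_I κ_I C(Ī I|0)₂₃ (e_I ⊗ ξ ⊗ e_Ī) C(I Ī|0)₁₂* on G*. Assuming C(Ī I|0)₂₃ C(I Ī|0)₁₂* = κ_I⁻¹ e_I with κ_I real, S is an anti-homomorphism: S(ξη) = S(η)S(ξ), and it satisfies Σσ S(ξ¹σ)ξ²σ = ε(ξ)e = Σσ ξ¹σ S(ξ²σ) where Δ(ξ) = Σ ξ¹σ⊗ξ²σ (i.e. the antipode relations hold with α = β = e). -/

import Mathlib

/-!
Write `b ∈ Vᴵ ⊗ V^Ī` for the cup and `cap : V^Ī ⊗ Vᴵ → ℂ` for the cap. Through the partial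
contractions `b♭ : (Vᴵ)* → V^Ī`, `b♯ : (V^Ī)* → Vᴵ`, `cap♯ : V^Ī → (Vᴵ)*` and
`cap♭ : Vᴵ → (V^Ī)*`, the conjugation condition is the snake identity `b♯ ∘ cap♭ = κ⁻¹`,
whose transpose reads `cap♯ ∘ b♭ = κ⁻¹`. Hence `Vᴵ` is finite-dimensional and `b♭` is
injective, so `dim Vᴵ ≤ dim V^Ī`; the same for `Ī` gives equality, `b♭` is invertible, and the
other snake identity `b♭ ∘ cap♯ = κ⁻¹` follows, with transpose `cap♭ ∘ b♯ = κ⁻¹`. Since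
`S(ξ) = κ · b♯ ∘ ξ_Īᵀ ∘ cap♭` on `Vᴵ`, this makes `S` anti-multiplicative.

For the antipode relations, cup and cap are components of `D` and `C` at the trivial
representation, on which orthonormality makes `Δ(ξ)` act through `ξ₀ = ε(ξ)`.
-/


open TensorProduct

noncomputable section

variable {ι : Type*} [Fintype ι] [DecidableEq ι]
variable {V : ι → Type*} [∀ i, AddCommGroup (V i)] [∀ i, Module ℂ (V i)]

/-- The "cup" element `b_I = C(I Ī|0)*(e₀) ∈ Vᴵ ⊗ V^Ī`. -/
def cupElt {N : ι → ι → ι → ℕ} (z : ι) (u : V z ≃ₗ[ℂ] ℂ) (conj : ι → ι)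
    (D : ∀ I J K : ι, Fin (N I J K) → (V K →ₗ[ℂ] V I ⊗[ℂ] V J))
    (I : ι) (hcup : 0 < N I (conj I) z) : V I ⊗[ℂ] V (conj I) :=
  D I (conj I) z ⟨0, hcup⟩ (u.symm 1)

/-- Insertion `v ↦ b_I ⊗ v` (re-associated): `Vᴵ → Vᴵ ⊗ (V^Ī ⊗ Vᴵ)`. -/
def insMap {N : ι → ι → ι → ℕ} (z : ι) (u : V z ≃ₗ[ℂ] ℂ) (conj : ι → ι)
    (D : ∀ I J K : ι, Fin (N I J K) → (V K →ₗ[ℂ] V I ⊗[ℂ] V J))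
    (I : ι) (hcup : 0 < N I (conj I) z) :
    V I →ₗ[ℂ] V I ⊗[ℂ] (V (conj I) ⊗[ℂ] V I) :=
  (TensorProduct.assoc ℂ (V I) (V (conj I)) (V I)).toLinearMap ∘ₗ
    (TensorProduct.mk ℂ (V I ⊗[ℂ] V (conj I)) (V I)) (cupElt z u conj D I hcup)

/-- Contraction with the "cap" `C(Ī I|0)` in the last two slots:
`Vᴵ ⊗ (V^Ī ⊗ Vᴵ) → Vᴵ`. -/
def contrMap {N : ι → ι → ι → ℕ} (z : ι) (u : V z ≃ₗ[ℂ] ℂ) (conj : ι → ι)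
    (C : ∀ I J K : ι, Fin (N I J K) → (V I ⊗[ℂ] V J →ₗ[ℂ] V K))
    (I : ι) (hcap : 0 < N (conj I) I z) :
    V I ⊗[ℂ] (V (conj I) ⊗[ℂ] V I) →ₗ[ℂ] V I :=
  (TensorProduct.rid ℂ (V I)).toLinearMap ∘ₗ
    TensorProduct.map LinearMap.id (u.toLinearMap ∘ₗ C (conj I) I z ⟨0, hcap⟩)

/-- The antipode `S(ξ) = Σ_I κ_I C(Ī I|0)₂₃ (e_I ⊗ ξ ⊗ e_Ī) C(I Ī|0)₁₂*`,
acting on `Vᴵ` by `v ↦ κ_I (id ⊗ C(Ī I|0))((1 ⊗ ξ_Ī ⊗ 1)(b_I ⊗ v))`. -/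
def antipodeS {N : ι → ι → ι → ℕ} (z : ι) (u : V z ≃ₗ[ℂ] ℂ) (conj : ι → ι)
    (κ : ι → ℝ)
    (C : ∀ I J K : ι, Fin (N I J K) → (V I ⊗[ℂ] V J →ₗ[ℂ] V K))
    (D : ∀ I J K : ι, Fin (N I J K) → (V K →ₗ[ℂ] V I ⊗[ℂ] V J))
    (hcap : ∀ I, 0 < N (conj I) I z) (hcup : ∀ I, 0 < N I (conj I) z)
    (ξ : ∀ i, Module.End ℂ (V i)) : ∀ i, Module.End ℂ (V i) :=
  fun I => (κ I : ℂ) •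
    (contrMap z u conj C I (hcap I) ∘ₗ
      TensorProduct.map LinearMap.id (TensorProduct.map (ξ (conj I)) LinearMap.id) ∘ₗ
      insMap z u conj D I (hcup I))

/-- The componentwise coproduct `Δ(ξ)` on `Vᴵ ⊗ Vᴶ`. -/
def coprodComp {N : ι → ι → ι → ℕ}
    (C : ∀ I J K : ι, Fin (N I J K) → (V I ⊗[ℂ] V J →ₗ[ℂ] V K))
    (D : ∀ I J K : ι, Fin (N I J K) → (V K →ₗ[ℂ] V I ⊗[ℂ] V J))
    (ξ : ∀ i, Module.End ℂ (V i)) (I J : ι) :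
    Module.End ℂ (V I ⊗[ℂ] V J) :=
  ∑ K, ∑ a, D I J K a ∘ₗ ξ K ∘ₗ C I J K a

open Module

section Snake

variable {K A B : Type*} [Field K] [AddCommGroup A] [Module K A] [AddCommGroup B] [Module K B]

def contractFst : A ⊗[K] B →ₗ[K] Dual K A →ₗ[K] B :=
  (LinearMap.rTensorHom B).flip.compr₂ (TensorProduct.lid K B).toLinearMap

def contractSnd : A ⊗[K] B →ₗ[K] Dual K B →ₗ[K] A :=
  (LinearMap.lTensorHom A).flip.compr₂ (TensorProduct.rid K A).toLinearMap

@[simp]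
lemma contractFst_tmul (a : A) (w : B) (l : Dual K A) : contractFst (a ⊗ₜ w) l = l a • w := by
  simp [contractFst, LinearMap.rTensorHom]

@[simp]
lemma contractSnd_tmul (a : A) (w : B) (m : Dual K B) : contractSnd (a ⊗ₜ w) m = m w • a := by
  simp [contractSnd, LinearMap.lTensorHom]

lemma rid_comp_map_comp_assoc_comp_mk (b : A ⊗[K] B) (cap : B ⊗[K] A →ₗ[K] K) :
    (TensorProduct.rid K A).toLinearMap ∘ₗ map LinearMap.id cap ∘ₗ
      (TensorProduct.assoc K A B A).toLinearMap ∘ₗ mk K (A ⊗[K] B) A b =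
    contractSnd b ∘ₗ (curry cap).flip := by
  ext v
  induction b using TensorProduct.induction_on with
  | zero => simp
  | tmul a w => simp
  | add x y hx hy => simp_all

lemma flip_curry_comp_map (cap : B ⊗[K] A →ₗ[K] K) (f : Module.End K B) :
    (curry (cap ∘ₗ map f LinearMap.id)).flip = f.dualMap ∘ₗ (curry cap).flip := by
  ext; simp

lemma flip_curry_smul (c : K) (cap : B ⊗[K] A →ₗ[K] K) :
    (curry (c • cap)).flip = c • (curry cap).flip := by
  ext; simp

lemma curry_comp_contractFst (b : A ⊗[K] B) (cap : B ⊗[K] A →ₗ[K] K) :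
    curry cap ∘ₗ contractFst b = (contractSnd b ∘ₗ (curry cap).flip).dualMap := by
  ext l v
  induction b using TensorProduct.induction_on with
  | zero => simp
  | tmul a w => simp [mul_comm]
  | add x y hx hy => simp_all

lemma flip_curry_comp_contractSnd (b : A ⊗[K] B) (cap : B ⊗[K] A →ₗ[K] K) :
    (curry cap).flip ∘ₗ contractSnd b = (contractFst b ∘ₗ curry cap).dualMap := by
  ext m w
  induction b using TensorProduct.induction_on with
  | zero => simp
  | tmul a w => simp [mul_comm]
  | add x y hx hy => simp_all

variable {b : A ⊗[K] B} {cap : B ⊗[K] A →ₗ[K] K} {c : K}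

lemma finiteDimensional_of_snake (hc : c ≠ 0)
    (h : contractSnd b ∘ₗ (curry cap).flip = c • LinearMap.id) : FiniteDimensional K A := by
  classical
  obtain ⟨s, rfl⟩ := TensorProduct.exists_finset b
  refine ⟨⟨s.image Prod.fst, eq_top_iff.2 fun v _ => ?_⟩⟩
  have hv : ∑ x ∈ s, cap (x.2 ⊗ₜ v) • x.1 = c • v := by
    simpa [map_sum] using LinearMap.congr_fun h v
  rw [← inv_smul_smul₀ hc v, ← hv]
  exact Submodule.smul_mem _ _ <| Submodule.sum_mem _ fun x hx =>
    Submodule.smul_mem _ _ <| Submodule.subset_span <| Finset.mem_image_of_mem _ hx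

lemma curry_contractFst_of_snake (h : contractSnd b ∘ₗ (curry cap).flip = c • LinearMap.id)
    (l : Dual K A) : curry cap (contractFst b l) = c • l := by
  rw [← LinearMap.comp_apply, curry_comp_contractFst, h]
  ext; simp

lemma contractFst_injective_of_snake (hc : c ≠ 0)
    (h : contractSnd b ∘ₗ (curry cap).flip = c • LinearMap.id) :
    Function.Injective (contractFst b) := fun l₁ l₂ hl =>
  smul_right_injective _ hc <| by
    simpa only [curry_contractFst_of_snake h] using congrArg (curry cap) hl

lemma finrank_le_of_snake [FiniteDimensional K B] (hc : c ≠ 0)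
    (h : contractSnd b ∘ₗ (curry cap).flip = c • LinearMap.id) :
    finrank K A ≤ finrank K B :=
  Subspace.dual_finrank_eq (K := K) (V := A) ▸
    LinearMap.finrank_le_finrank_of_injective (contractFst_injective_of_snake hc h)

lemma contractFst_comp_curry_of_snake [FiniteDimensional K B]
    (hBA : finrank K B ≤ finrank K A) (hc : c ≠ 0)
    (h : contractSnd b ∘ₗ (curry cap).flip = c • LinearMap.id) :
    contractFst b ∘ₗ curry cap = c • LinearMap.id := by
  have := finiteDimensional_of_snake hc h
  have hsurj : Function.Surjective (contractFst b) :=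
    (LinearMap.injective_iff_surjective_of_finrank_eq_finrank
      (by rw [Subspace.dual_finrank_eq]; exact (finrank_le_of_snake hc h).antisymm hBA)).1
      (contractFst_injective_of_snake hc h)
  ext w
  obtain ⟨l, rfl⟩ := hsurj w
  simp [curry_contractFst_of_snake h]

lemma snake_comp_snake (hflip : contractFst b ∘ₗ curry cap = c • LinearMap.id)
    (f g : Module.End K B) :
    (contractSnd b ∘ₗ (curry (cap ∘ₗ map g LinearMap.id)).flip) ∘ₗ
        (contractSnd b ∘ₗ (curry (cap ∘ₗ map f LinearMap.id)).flip) =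
      c • contractSnd b ∘ₗ (curry (cap ∘ₗ map (f ∘ₗ g) LinearMap.id)).flip := by
  have hzag (m : Dual K B) : (curry cap).flip (contractSnd b m) = c • m := by
    rw [← LinearMap.comp_apply, flip_curry_comp_contractSnd, hflip]
    ext; simp
  ext v
  simp only [flip_curry_comp_map, LinearMap.comp_apply, hzag, map_smul, LinearMap.smul_apply]
  rfl

end Snake

def capMap {N : ι → ι → ι → ℕ} (z : ι) (u : V z ≃ₗ[ℂ] ℂ) (conj : ι → ι)
    (C : ∀ I J K : ι, Fin (N I J K) → (V I ⊗[ℂ] V J →ₗ[ℂ] V K))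
    (I : ι) (hcap : 0 < N (conj I) I z) : V (conj I) ⊗[ℂ] V I →ₗ[ℂ] ℂ :=
  u.toLinearMap ∘ₗ C (conj I) I z ⟨0, hcap⟩

section Antipode

omit [Fintype ι] [DecidableEq ι]

variable {N : ι → ι → ι → ℕ} {z : ι} {u : V z ≃ₗ[ℂ] ℂ} {conj : ι → ι}
  {C : ∀ I J K : ι, Fin (N I J K) → (V I ⊗[ℂ] V J →ₗ[ℂ] V K)}
  {D : ∀ I J K : ι, Fin (N I J K) → (V K →ₗ[ℂ] V I ⊗[ℂ] V J)}

lemma contrMap_comp_insMap {I : ι} (hcap : 0 < N (conj I) I z) (hcup : 0 < N I (conj I) z)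
    (F : Module.End ℂ (V (conj I) ⊗[ℂ] V I)) :
    contrMap z u conj C I hcap ∘ₗ map LinearMap.id F ∘ₗ insMap z u conj D I hcup =
      contractSnd (cupElt z u conj D I hcup) ∘ₗ
        (curry (capMap z u conj C I hcap ∘ₗ F)).flip := by
  rw [← rid_comp_map_comp_assoc_comp_mk]
  change _ = _ ∘ₗ LinearMap.lTensor _ (_ ∘ₗ F) ∘ₗ _
  rw [LinearMap.lTensor_comp]
  rfl

lemma snake_of_contrMap_comp_insMap {I : ι} {hcap : 0 < N (conj I) I z}
    {hcup : 0 < N I (conj I) z} {c : ℂ}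
    (h : contrMap z u conj C I hcap ∘ₗ insMap z u conj D I hcup = c • LinearMap.id) :
    contractSnd (cupElt z u conj D I hcup) ∘ₗ (curry (capMap z u conj C I hcap)).flip =
      c • LinearMap.id := by
  have h' := contrMap_comp_insMap (u := u) (C := C) (D := D) hcap hcup LinearMap.id
  rw [TensorProduct.map_id, LinearMap.id_comp, LinearMap.comp_id, h] at h'
  exact h'.symm

lemma antipodeS_apply (κ : ι → ℝ) (hcap : ∀ I, 0 < N (conj I) I z)
    (hcup : ∀ I, 0 < N I (conj I) z) (ξ : ∀ i, Module.End ℂ (V i)) (I : ι) :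
    antipodeS z u conj κ C D hcap hcup ξ I =
      (κ I : ℂ) • contractSnd (cupElt z u conj D I (hcup I)) ∘ₗ
        (curry (capMap z u conj C I (hcap I) ∘ₗ map (ξ (conj I)) LinearMap.id)).flip :=
  congrArg _ (contrMap_comp_insMap _ _ _)

lemma antipodeS_mul {κ : ι → ℝ} (hκ : ∀ I, κ I ≠ 0) {hcap : ∀ I, 0 < N (conj I) I z}
    {hcup : ∀ I, 0 < N I (conj I) z}
    (hzag : ∀ I, contractFst (cupElt z u conj D I (hcup I)) ∘ₗ
      curry (capMap z u conj C I (hcap I)) = ((κ I : ℂ))⁻¹ • LinearMap.id)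
    (ξ η : ∀ i, Module.End ℂ (V i)) :
    antipodeS z u conj κ C D hcap hcup (ξ * η) =
      antipodeS z u conj κ C D hcap hcup η * antipodeS z u conj κ C D hcap hcup ξ := by
  funext I
  rw [Pi.mul_apply, Module.End.mul_eq_comp, antipodeS_apply, antipodeS_apply, antipodeS_apply,
    Pi.mul_apply, Module.End.mul_eq_comp, LinearMap.smul_comp, LinearMap.comp_smul,
    snake_comp_snake (hzag I), smul_smul, smul_smul]
  congr 1
  field_simp [Complex.ofReal_ne_zero.2 (hκ I)]

end Antipode

lemma LinearEquiv.apply_smul_symm_one {R M : Type*} [CommSemiring R] [AddCommMonoid M]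
    [Module R M] (u : M ≃ₗ[R] R) (w : M) : u w • u.symm 1 = w := by
  rw [← map_smul, smul_eq_mul, mul_one, LinearEquiv.symm_apply_apply]

lemma LinearEquiv.toLinearMap_comp_eq_smul {R M : Type*} [CommSemiring R] [AddCommMonoid M]
    [Module R M] (u : M ≃ₗ[R] R) (ζ : Module.End R M) :
    u.toLinearMap ∘ₗ ζ = u (ζ (u.symm 1)) • u.toLinearMap := by
  ext w
  conv_lhs => rw [← u.apply_smul_symm_one w]
  simp [mul_comm]

section Counit

omit [DecidableEq ι]

variable {N : ι → ι → ι → ℕ} {z : ι} {u : V z ≃ₗ[ℂ] ℂ} {conj : ι → ι}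
  {C : ∀ I J K : ι, Fin (N I J K) → (V I ⊗[ℂ] V J →ₗ[ℂ] V K)}
  {D : ∀ I J K : ι, Fin (N I J K) → (V K →ₗ[ℂ] V I ⊗[ℂ] V J)}
variable
  (h1 : ∀ (I J K : ι) (a b : Fin (N I J K)),
    C I J K a ∘ₗ D I J K b = if a = b then LinearMap.id else 0)
  (h2 : ∀ (I J K L : ι) (a : Fin (N I J K)) (b : Fin (N I J L)),
    K ≠ L → C I J K a ∘ₗ D I J L b = 0)
include h1 h2

lemma comp_coprodComp
    (ξ : ∀ i, Module.End ℂ (V i)) {I J K : ι} (a : Fin (N I J K)) :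
    C I J K a ∘ₗ coprodComp C D ξ I J = ξ K ∘ₗ C I J K a := by
  refine LinearMap.ext fun w => ?_
  simp only [coprodComp, LinearMap.comp_apply, LinearMap.sum_apply, map_sum]
  rw [Finset.sum_eq_single K (fun L _ hL => Finset.sum_eq_zero fun b _ => by
    simpa using LinearMap.congr_fun (h2 I J K L a b hL.symm) _) (by simp)]
  rw [Finset.sum_eq_single a (fun b _ hb => by
    simp [← LinearMap.comp_apply (C I J K a), h1, hb.symm]) (by simp)]
  simp [← LinearMap.comp_apply (C I J K a), h1]

lemma coprodComp_comp
    (ξ : ∀ i, Module.End ℂ (V i)) {I J K : ι} (a : Fin (N I J K)) :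
    coprodComp C D ξ I J ∘ₗ D I J K a = D I J K a ∘ₗ ξ K := by
  refine LinearMap.ext fun w => ?_
  simp only [coprodComp, LinearMap.comp_apply, LinearMap.sum_apply]
  rw [Finset.sum_eq_single K (fun L _ hL => Finset.sum_eq_zero fun b _ => by
    simp [← LinearMap.comp_apply (C I J L b), h2 I J L K b a hL]) (by simp)]
  rw [Finset.sum_eq_single a (fun b _ hb => by
    simp [← LinearMap.comp_apply (C I J K b), h1, hb]) (by simp)]
  simp [← LinearMap.comp_apply (C I J K a), h1]

lemma counit_left {c : ℂ} (hc : c ≠ 0)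
    {J : ι} (hcap : 0 < N (conj J) J z) (hcup : 0 < N J (conj J) z)
    (hsnake : contractSnd (cupElt z u conj D J hcup) ∘ₗ (curry (capMap z u conj C J hcap)).flip
      = c⁻¹ • LinearMap.id)
    (ξ : ∀ i, Module.End ℂ (V i)) :
    c • (contrMap z u conj C J hcap ∘ₗ
        map LinearMap.id (coprodComp C D ξ (conj J) J) ∘ₗ insMap z u conj D J hcup) =
      u (ξ z (u.symm 1)) • LinearMap.id := by
  have hcapΔ : capMap z u conj C J hcap ∘ₗ coprodComp C D ξ (conj J) J =
      u (ξ z (u.symm 1)) • capMap z u conj C J hcap := by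
    rw [capMap, LinearMap.comp_assoc, comp_coprodComp h1 h2 ξ, ← LinearMap.comp_assoc,
      u.toLinearMap_comp_eq_smul, LinearMap.smul_comp]
  rw [contrMap_comp_insMap, hcapΔ, flip_curry_smul, LinearMap.comp_smul, hsnake, smul_smul,
    smul_smul]
  congr 1
  field_simp

lemma counit_right {c : ℂ} (hc : c ≠ 0)
    {J : ι} (hcap : 0 < N (conj J) J z) (hcup : 0 < N J (conj J) z)
    (hsnake : contractSnd (cupElt z u conj D J hcup) ∘ₗ (curry (capMap z u conj C J hcap)).flip
      = c⁻¹ • LinearMap.id)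
    (ξ : ∀ i, Module.End ℂ (V i)) :
    c •
        ((TensorProduct.rid ℂ (V J)).toLinearMap ∘ₗ
          TensorProduct.map LinearMap.id (u.toLinearMap ∘ₗ C (conj J) J z ⟨0, hcap⟩) ∘ₗ
          (TensorProduct.assoc ℂ (V J) (V (conj J)) (V J)).toLinearMap ∘ₗ
          TensorProduct.map (coprodComp C D ξ J (conj J)) LinearMap.id ∘ₗ
          (TensorProduct.mk ℂ (V J ⊗[ℂ] V (conj J)) (V J)) (cupElt z u conj D J hcup)) =
      u (ξ z (u.symm 1)) • LinearMap.id := by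
  have hΔ : coprodComp C D ξ J (conj J) (cupElt z u conj D J hcup) =
      u (ξ z (u.symm 1)) • cupElt z u conj D J hcup := by
    rw [cupElt, ← LinearMap.comp_apply, coprodComp_comp h1 h2 ξ, LinearMap.comp_apply]
    conv_lhs => rw [← u.apply_smul_symm_one (ξ z (u.symm 1))]
    exact map_smul _ _ _
  have hmk : map (coprodComp C D ξ J (conj J)) LinearMap.id ∘ₗ
      mk ℂ (V J ⊗[ℂ] V (conj J)) (V J) (cupElt z u conj D J hcup) =
      mk ℂ (V J ⊗[ℂ] V (conj J)) (V J)
        (u (ξ z (u.symm 1)) • cupElt z u conj D J hcup) := by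
    ext; simp [hΔ, smul_tmul']
  rw [hmk, rid_comp_map_comp_assoc_comp_mk, map_smul, LinearMap.smul_comp,
    show u.toLinearMap ∘ₗ C (conj J) J z ⟨0, hcap⟩ = capMap z u conj C J hcap from rfl,
    hsnake, smul_smul, smul_smul]
  congr 1
  field_simp

end Counit

theorem clebsch_gordan_antipode_general
    (z : ι) (u : V z ≃ₗ[ℂ] ℂ) (conj : ι → ι) (κ : ι → ℝ)
    (hconj : Function.Involutive conj)
    (hκ : ∀ I, κ I ≠ 0)
    (N : ι → ι → ι → ℕ)
    (C : ∀ I J K : ι, Fin (N I J K) → (V I ⊗[ℂ] V J →ₗ[ℂ] V K))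
    (D : ∀ I J K : ι, Fin (N I J K) → (V K →ₗ[ℂ] V I ⊗[ℂ] V J))
    (hcap : ∀ I, 0 < N (conj I) I z) (hcup : ∀ I, 0 < N I (conj I) z)
    -- orthonormality of the Clebsch–Gordan maps
    (h1 : ∀ (I J K : ι) (a b : Fin (N I J K)),
      C I J K a ∘ₗ D I J K b = if a = b then LinearMap.id else 0)
    (h2 : ∀ (I J K L : ι) (a : Fin (N I J K)) (b : Fin (N I J L)),
      K ≠ L → C I J K a ∘ₗ D I J L b = 0)
    -- the conjugation condition `C(Ī I|0)₂₃ C(I Ī|0)₁₂* = κ_I⁻¹ e_I`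
    (hcc : ∀ I, contrMap z u conj C I (hcap I) ∘ₗ insMap z u conj D I (hcup I)
      = ((κ I : ℂ))⁻¹ • LinearMap.id) :
    -- S is an anti-homomorphism
    (∀ ξ η : ∀ i, Module.End ℂ (V i),
      antipodeS z u conj κ C D hcap hcup (ξ * η) =
        antipodeS z u conj κ C D hcap hcup η *
        antipodeS z u conj κ C D hcap hcup ξ) ∧
    -- `Σσ S(ξ¹σ) ξ²σ = ε(ξ) e`, componentwise on `Vᴶ`
    (∀ (ξ : ∀ i, Module.End ℂ (V i)) (J : ι),
      (κ J : ℂ) •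
        (contrMap z u conj C J (hcap J) ∘ₗ
          TensorProduct.map LinearMap.id (coprodComp C D ξ (conj J) J) ∘ₗ
          insMap z u conj D J (hcup J))
        = (u (ξ z (u.symm 1))) • (LinearMap.id : Module.End ℂ (V J))) ∧
    -- `Σσ ξ¹σ S(ξ²σ) = ε(ξ) e`, componentwise on `Vᴶ`
    (∀ (ξ : ∀ i, Module.End ℂ (V i)) (J : ι),
      (κ J : ℂ) •
        ((TensorProduct.rid ℂ (V J)).toLinearMap ∘ₗ
          TensorProduct.map LinearMap.id
            (u.toLinearMap ∘ₗ C (conj J) J z ⟨0, hcap J⟩) ∘ₗ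
          (TensorProduct.assoc ℂ (V J) (V (conj J)) (V J)).toLinearMap ∘ₗ
          TensorProduct.map (coprodComp C D ξ J (conj J)) LinearMap.id ∘ₗ
          (TensorProduct.mk ℂ (V J ⊗[ℂ] V (conj J)) (V J)) (cupElt z u conj D J (hcup J)))
        = (u (ξ z (u.symm 1))) • (LinearMap.id : Module.End ℂ (V J))) := by
  have hκC (I : ι) : (κ I : ℂ) ≠ 0 := Complex.ofReal_ne_zero.2 (hκ I)
  have hκinv (I : ι) : ((κ I : ℂ))⁻¹ ≠ 0 := inv_ne_zero (hκC I)
  have hsnake (I : ι) := snake_of_contrMap_comp_insMap (hcc I)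
  have (I : ι) : FiniteDimensional ℂ (V I) := finiteDimensional_of_snake (hκinv I) (hsnake I)
  have hzag (I : ι) :
      contractFst (cupElt z u conj D I (hcup I)) ∘ₗ curry (capMap z u conj C I (hcap I)) =
        ((κ I : ℂ))⁻¹ • LinearMap.id := by
    have hle := finrank_le_of_snake (hκinv (conj I)) (hsnake (conj I))
    rw [hconj I] at hle
    exact contractFst_comp_curry_of_snake hle (hκinv I) (hsnake I)
  exact ⟨antipodeS_mul hκ hzag, fun ξ J => counit_left h1 h2 (hκC J) _ _ (hsnake J) ξ,
    fun ξ J => counit_right h1 h2 (hκC J) _ _ (hsnake J) ξ⟩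

/-- Define
`S(ξ) = Σ_I κ_I C(Ī I|0)₂₃ (e_I ⊗ ξ ⊗ e_Ī) C(I Ī|0)₁₂*` on `G* = Π I, End Vᴵ`.
Assuming `C(Ī I|0)₂₃ C(I Ī|0)₁₂* = κ_I⁻¹ e_I` with `κ_I` real, `S` is an
anti-homomorphism `S(ξη) = S(η)S(ξ)` and satisfies the antipode relations
`Σσ S(ξ¹σ)ξ²σ = ε(ξ)e = Σσ ξ¹σ S(ξ²σ)` (with `α = β = e`), where
`Δ(ξ) = Σ ξ¹σ ⊗ ξ²σ` and `ε(ξ) = ⟨e₀|ξ|e₀⟩`.  The antipode relations are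
expressed componentwise: on `Vᴶ` only the `(J̄,J)`- resp. `(J,J̄)`-component of
`Δ(ξ)` contributes, contracted with cup and cap. -/
theorem clebsch_gordan_antipode
    (z : ι) (u : V z ≃ₗ[ℂ] ℂ) (conj : ι → ι) (κ : ι → ℝ)
    (hconj : Function.Involutive conj)
    (hκ : ∀ I, κ I ≠ 0)
    (N : ι → ι → ι → ℕ)
    (C : ∀ I J K : ι, Fin (N I J K) → (V I ⊗[ℂ] V J →ₗ[ℂ] V K))
    (D : ∀ I J K : ι, Fin (N I J K) → (V K →ₗ[ℂ] V I ⊗[ℂ] V J))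
    (hcap : ∀ I, 0 < N (conj I) I z) (hcup : ∀ I, 0 < N I (conj I) z)
    -- orthonormality of the Clebsch–Gordan maps
    (h1 : ∀ (I J K : ι) (a b : Fin (N I J K)),
      C I J K a ∘ₗ D I J K b = if a = b then LinearMap.id else 0)
    (h2 : ∀ (I J K L : ι) (a : Fin (N I J K)) (b : Fin (N I J L)),
      K ≠ L → C I J K a ∘ₗ D I J L b = 0)
    -- completeness
    (hcompl : ∀ I J : ι, (∑ K, ∑ a, D I J K a ∘ₗ C I J K a) = LinearMap.id)
    -- normalization `C(I0|I) = e_I = C(0I|I)`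
    (hNl : ∀ J K : ι, K ≠ J → N z J K = 0)
    (hNr : ∀ J K : ι, K ≠ J → N J z K = 0)
    (hCl : ∀ (J : ι) (a : Fin (N z J J)) (c : V z) (v : V J),
      C z J J a (c ⊗ₜ[ℂ] v) = u c • v)
    (hDl : ∀ (J : ι) (a : Fin (N z J J)) (v : V J),
      D z J J a v = (u.symm 1) ⊗ₜ[ℂ] v)
    (hCr : ∀ (J : ι) (a : Fin (N J z J)) (v : V J) (c : V z),
      C J z J a (v ⊗ₜ[ℂ] c) = u c • v)
    (hDr : ∀ (J : ι) (a : Fin (N J z J)) (v : V J),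
      D J z J a v = v ⊗ₜ[ℂ] (u.symm 1))
    -- the conjugation condition `C(Ī I|0)₂₃ C(I Ī|0)₁₂* = κ_I⁻¹ e_I`
    (hcc : ∀ I, contrMap z u conj C I (hcap I) ∘ₗ insMap z u conj D I (hcup I)
      = ((κ I : ℂ))⁻¹ • LinearMap.id) :
    -- S is an anti-homomorphism
    (∀ ξ η : ∀ i, Module.End ℂ (V i),
      antipodeS z u conj κ C D hcap hcup (ξ * η) =
        antipodeS z u conj κ C D hcap hcup η *
        antipodeS z u conj κ C D hcap hcup ξ) ∧
    -- `Σσ S(ξ¹σ) ξ²σ = ε(ξ) e`, componentwise on `Vᴶ`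
    (∀ (ξ : ∀ i, Module.End ℂ (V i)) (J : ι),
      (κ J : ℂ) •
        (contrMap z u conj C J (hcap J) ∘ₗ
          TensorProduct.map LinearMap.id (coprodComp C D ξ (conj J) J) ∘ₗ
          insMap z u conj D J (hcup J))
        = (u (ξ z (u.symm 1))) • (LinearMap.id : Module.End ℂ (V J))) ∧
    -- `Σσ ξ¹σ S(ξ²σ) = ε(ξ) e`, componentwise on `Vᴶ`
    (∀ (ξ : ∀ i, Module.End ℂ (V i)) (J : ι),
      (κ J : ℂ) •
        ((TensorProduct.rid ℂ (V J)).toLinearMap ∘ₗ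
          TensorProduct.map LinearMap.id
            (u.toLinearMap ∘ₗ C (conj J) J z ⟨0, hcap J⟩) ∘ₗ
          (TensorProduct.assoc ℂ (V J) (V (conj J)) (V J)).toLinearMap ∘ₗ
          TensorProduct.map (coprodComp C D ξ J (conj J)) LinearMap.id ∘ₗ
          (TensorProduct.mk ℂ (V J ⊗[ℂ] V (conj J)) (V J)) (cupElt z u conj D J (hcup J)))
        = (u (ξ z (u.symm 1))) • (LinearMap.id : Module.End ℂ (V J))) :=
  clebsch_gordan_antipode_general z u conj κ hconj hκ N C D hcap hcup h1 h2 hcc
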